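/- Let m ≥ 2. Every monoid admitting a presentation satisfying the condition C(m) also admits a generator-minimal equivalence presentation satisfying C(m); that is, if M is isomorphic to the monoid presented by some C(m) presentation, then M is isomorphic to the monoid presented by some presentation which is simultaneously C(m), generator-minimal, and an equivalence presentation. -/

import Mathlib

/-!
By `C(2)`, a letter `a` that is itself a relation word occurs in no other relation word, since
otherwise `a` would be a piece. So every relation word is either such a letter or avoids all of
them. Drop each such letter whose class contains a relation word avoiding these letters, keep one
letter of every other class of such letters, and rewrite each dropped letter as a relation word
of its class over the kept letters. Over the kept letters, relate every two relation words of `R`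
that are equal in the monoid. This is an equivalence presentation whose relation words and
pieces are among those of `R`, so it is `C(m)`; and a kept letter is related only to itself, so
its class is a singleton and it cannot be a product of other generators.
-/

open FreeMonoid

/-- The congruence on the free monoid generated by a presentation `R`. -/
def presCon {A : Type*} (R : Set (FreeMonoid A × FreeMonoid A)) : Con (FreeMonoid A) :=
  conGen fun u v => (u, v) ∈ R

/-- `w` is a relation word of the presentation `R`. -/
def IsRelWord {A : Type*} (R : Set (FreeMonoid A × FreeMonoid A)) (w : FreeMonoid A) : Prop :=
  ∃ p ∈ R, p.1 = w ∨ p.2 = w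

/-- `u` is a factor of `w`. -/
def IsFactor {A : Type*} (u w : FreeMonoid A) : Prop := ∃ p q, w = p * u * q

/-- `u` is a piece of the presentation `R`: it is empty, or occurs as a factor of two
distinct relation words, or in two different (possibly overlapping) positions within
one relation word. -/
def IsPiece {A : Type*} (R : Set (FreeMonoid A × FreeMonoid A)) (u : FreeMonoid A) : Prop :=
  u = 1 ∨
  (∃ w₁ w₂, IsRelWord R w₁ ∧ IsRelWord R w₂ ∧ w₁ ≠ w₂ ∧ IsFactor u w₁ ∧ IsFactor u w₂) ∨
  (∃ w, IsRelWord R w ∧ ∃ p q p' q', w = p * u * q ∧ w = p' * u * q' ∧ p ≠ p')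

/-- The small overlap condition `C(m)`: no relation word is a product of strictly fewer
than `m` pieces. -/
def SmallOverlapC {A : Type*} (R : Set (FreeMonoid A × FreeMonoid A)) (m : ℕ) : Prop :=
  ∀ w, IsRelWord R w → ∀ l : List (FreeMonoid A),
    (∀ x ∈ l, IsPiece R x) → l.prod = w → m ≤ l.length

/-- The generator `a` is redundant: its class is a product of classes of other
generators. -/
def IsRedundant {A : Type*} (R : Set (FreeMonoid A × FreeMonoid A)) (a : A) : Prop :=
  (presCon R).mk' (of a) ∈
    Submonoid.closure {x : (presCon R).Quotient | ∃ b : A, b ≠ a ∧ x = (presCon R).mk' (of b)}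

/-- A presentation is generator-minimal if no generator is redundant. -/
def GeneratorMinimal {A : Type*} (R : Set (FreeMonoid A × FreeMonoid A)) : Prop :=
  ∀ a : A, ¬ IsRedundant R a

/-- `⟨A|R⟩` is an equivalence presentation: `R` is an equivalence relation on the set
of relation words. -/
def IsEquivPres {A : Type*} (R : Set (FreeMonoid A × FreeMonoid A)) : Prop :=
  (∀ w, IsRelWord R w → (w, w) ∈ R) ∧
  (∀ u v, (u, v) ∈ R → (v, u) ∈ R) ∧
  (∀ u v w, (u, v) ∈ R → (v, w) ∈ R → (u, w) ∈ R)

universe u v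

namespace FreeMonoid

variable {A B : Type*}

theorem mul_eq_one_iff {x y : FreeMonoid B} : x * y = 1 ↔ x = 1 ∧ y = 1 :=
  List.append_eq_nil_iff

theorem mul_eq_of_iff {x y : FreeMonoid B} {c : B} :
    x * y = of c ↔ x = 1 ∧ y = of c ∨ x = of c ∧ y = 1 :=
  List.append_eq_singleton_iff

def conOneOf (b : B) : Con (FreeMonoid B) where
  r u v := (u = 1 ↔ v = 1) ∧ (u = of b ↔ v = of b)
  iseqv := ⟨fun _ => ⟨Iff.rfl, Iff.rfl⟩, fun h => ⟨h.1.symm, h.2.symm⟩,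
    fun h h' => ⟨h.1.trans h'.1, h.2.trans h'.2⟩⟩
  mul' := by
    rintro u₁ v₁ u₂ v₂ ⟨h₁, h₁'⟩ ⟨h₂, h₂'⟩
    simp only [mul_eq_one_iff, mul_eq_of_iff]
    exact ⟨and_congr h₁ h₂, or_congr (and_congr h₁ h₂') (and_congr h₁' h₂)⟩

theorem eq_of_conGen_of {r : FreeMonoid B → FreeMonoid B → Prop} {b : B}
    (hr : ∀ u v, r u v → u ≠ 1 ∧ v ≠ 1 ∧ (u = of b ↔ v = of b)) {w : FreeMonoid B}
    (hw : conGen r w (of b)) : w = of b := by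
  have hle : conGen r ≤ conOneOf b := Con.conGen_le.mpr fun u v huv => by
    obtain ⟨hu, hv, hb⟩ := hr u v huv
    exact ⟨iff_of_false hu hv, hb⟩
  exact (hle hw).2.mpr rfl

theorem map_injective {f : A → B} (hf : Function.Injective f) :
    Function.Injective (map f) := fun _ _ h =>
  List.map_injective_iff.mpr hf h

theorem lift_eq_self {f : B → FreeMonoid B} {w : FreeMonoid B} (h : ∀ a ∈ w, f a = of a) :
    lift f w = w := by
  induction w using FreeMonoid.inductionOn' with
  | one => rfl
  | of_mul a w ih =>
    rw [map_mul, lift_eval_of, h a (mem_mul.mpr (.inl mem_of_self)),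
      ih fun c hc => h c (mem_mul.mpr (.inr hc))]

open Classical in
noncomputable def restrict (s : Set B) : FreeMonoid B →* FreeMonoid s :=
  lift fun a => if h : a ∈ s then of ⟨a, h⟩ else 1

theorem restrict_map_val {s : Set B} (w : FreeMonoid s) : restrict s (map Subtype.val w) = w := by
  have : (restrict s).comp (map Subtype.val) = MonoidHom.id _ :=
    hom_eq fun b => by simp [restrict, b.2]
  exact DFunLike.congr_fun this w

theorem map_val_restrict {s : Set B} {w : FreeMonoid B} (hw : ∀ a ∈ w, a ∈ s) :
    map Subtype.val (restrict s w) = w := by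
  induction w using FreeMonoid.inductionOn' with
  | one => rfl
  | of_mul a w ih =>
    have ha : a ∈ s := hw a (mem_mul.mpr (.inl mem_of_self))
    rw [map_mul, map_mul, ih fun c hc => hw c (mem_mul.mpr (.inr hc))]
    simp [restrict, ha]

theorem isFactor_of_mem {a : B} {w : FreeMonoid B} (h : a ∈ w) : IsFactor (of a) w := by
  obtain ⟨s, t, hst⟩ := List.append_of_mem (show a ∈ toList w from h)
  refine ⟨ofList s, ofList t, ?_⟩
  change toList w = s ++ [a] ++ t
  simp [hst]

end FreeMonoid

section Presentation

variable {A B : Type*} {R : Set (FreeMonoid A × FreeMonoid A)}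
  {S : Set (FreeMonoid B × FreeMonoid B)} {m : ℕ}

theorem SmallOverlapC.ne_one (hso : SmallOverlapC R m) (hm : 1 ≤ m) {w : FreeMonoid A}
    (hw : IsRelWord R w) : w ≠ 1 := by
  intro h
  have := hso w hw [] (by simp) (by simp [h])
  simp only [List.length_nil] at this
  omega

theorem SmallOverlapC.not_isPiece (hso : SmallOverlapC R m) (hm : 2 ≤ m) {w : FreeMonoid A}
    (hw : IsRelWord R w) : ¬ IsPiece R w := by
  intro h
  have := hso w hw [w] (by simpa) (by simp)
  simp only [List.length_singleton] at this
  omega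

theorem SmallOverlapC.eq_of_mem (hso : SmallOverlapC R m) (hm : 2 ≤ m) {a : A}
    (ha : IsRelWord R (of a)) {w : FreeMonoid A} (hw : IsRelWord R w) (haw : a ∈ w) :
    w = of a := by
  by_contra hne
  exact hso.not_isPiece hm ha
    (.inr (.inl ⟨of a, w, ha, hw, Ne.symm hne, ⟨1, 1, by simp⟩, isFactor_of_mem haw⟩))

theorem SmallOverlapC.eq_of_or_forall_not (hso : SmallOverlapC R m) (hm : 2 ≤ m)
    {w : FreeMonoid A} (hw : IsRelWord R w) :
    (∃ a, IsRelWord R (of a) ∧ w = of a) ∨ ∀ c ∈ w, ¬ IsRelWord R (of c) := by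
  by_cases h : ∃ c ∈ w, IsRelWord R (of c)
  · obtain ⟨c, hcw, hc⟩ := h
    exact .inl ⟨c, hc, hso.eq_of_mem hm hc hw hcw⟩
  · exact .inr fun c hcw hc => h ⟨c, hcw, hc⟩

theorem IsPiece.map {f : FreeMonoid B →* FreeMonoid A} (hf : Function.Injective f)
    (hS : ∀ w, IsRelWord S w → IsRelWord R (f w)) {u : FreeMonoid B} (hu : IsPiece S u) :
    IsPiece R (f u) := by
  rcases hu with rfl | ⟨w₁, w₂, h₁, h₂, hne, ⟨p₁, q₁, rfl⟩, ⟨p₂, q₂, rfl⟩⟩ |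
    ⟨w, hw, p, q, p', q', rfl, e, hne⟩
  · exact .inl (map_one f)
  · exact .inr (.inl ⟨_, _, hS _ h₁, hS _ h₂, hf.ne hne, ⟨f p₁, f q₁, by simp only [map_mul]⟩,
      ⟨f p₂, f q₂, by simp only [map_mul]⟩⟩)
  · exact .inr (.inr ⟨_, hS _ hw, f p, f q, f p', f q', by simp only [map_mul],
      by simp only [e, map_mul], hf.ne hne⟩)

theorem SmallOverlapC.of_map (hso : SmallOverlapC R m) {f : FreeMonoid B →* FreeMonoid A}
    (hf : Function.Injective f) (hS : ∀ w, IsRelWord S w → IsRelWord R (f w)) :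
    SmallOverlapC S m := by
  intro w hw l hl hprod
  simpa using hso (f w) (hS w hw) (l.map f)
    (by simpa using fun x hx => (hl x hx).map hf hS) (by rw [← hprod, map_list_prod])

theorem not_isRedundant_of {b : B}
    (hS : ∀ p ∈ S, p.1 ≠ 1 ∧ p.2 ≠ 1 ∧ (p.1 = of b ↔ p.2 = of b)) : ¬ IsRedundant S b := by
  intro hb
  have hclosure : ∀ x ∈ Submonoid.closure {x : (presCon S).Quotient |
      ∃ c : B, c ≠ b ∧ x = (presCon S).mk' (of c)},
      ∃ u : FreeMonoid B, b ∉ u ∧ (presCon S).mk' u = x := by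
    intro x hx
    induction hx using Submonoid.closure_induction with
    | mem x hx =>
      obtain ⟨c, hc, rfl⟩ := hx
      exact ⟨of c, fun h => hc (mem_of.mp h).symm, rfl⟩
    | one => exact ⟨1, notMem_one, map_one _⟩
    | mul x y _ _ ihx ihy =>
      obtain ⟨u, hu, rfl⟩ := ihx
      obtain ⟨v, hv, rfl⟩ := ihy
      exact ⟨u * v, fun h => (mem_mul.mp h).elim hu hv, map_mul _ _ _⟩
  obtain ⟨u, hu, hub⟩ := hclosure _ hb
  have : u = of b := eq_of_conGen_of (fun u v huv => hS (u, v) huv) ((Con.eq _).mp hub)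
  exact hu (this ▸ mem_of_self)

def kernelPres {X : Type*} (P : FreeMonoid B → Prop) (g : FreeMonoid B → X) :
    Set (FreeMonoid B × FreeMonoid B) :=
  {p | P p.1 ∧ P p.2 ∧ g p.1 = g p.2}

theorem isRelWord_kernelPres {X : Type*} {P : FreeMonoid B → Prop} {g : FreeMonoid B → X}
    {w : FreeMonoid B} : IsRelWord (kernelPres P g) w ↔ P w := by
  constructor
  · rintro ⟨p, hp, rfl | rfl⟩
    exacts [hp.1, hp.2.1]
  · exact fun hw => ⟨(w, w), ⟨hw, hw, rfl⟩, .inl rfl⟩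

theorem isEquivPres_kernelPres {X : Type*} (P : FreeMonoid B → Prop) (g : FreeMonoid B → X) :
    IsEquivPres (kernelPres P g) :=
  ⟨fun _ hw => have hw := isRelWord_kernelPres.mp hw; ⟨hw, hw, rfl⟩,
    fun _ _ h => ⟨h.2.1, h.1, h.2.2.symm⟩,
    fun _ _ _ h h' => ⟨h.1, h'.2.1, h.2.2.trans h'.2.2⟩⟩

noncomputable def presQuotientEquiv (f : FreeMonoid A →* FreeMonoid B)
    (g : FreeMonoid B →* FreeMonoid A) (hf : ∀ u v, (u, v) ∈ R → presCon S (f u) (f v))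
    (hg : ∀ u v, (u, v) ∈ S → presCon R (g u) (g v)) (hgf : ∀ u, presCon R (g (f u)) u)
    (hfg : ∀ w, presCon S (f (g w)) w) :
    (presCon R).Quotient ≃* (presCon S).Quotient :=
  MonoidHom.toMulEquiv
    ((presCon R).lift ((presCon S).mk'.comp f)
      (Con.conGen_le.mpr fun u v h => (Con.ker_rel _).mpr ((Con.eq _).mpr (hf u v h))))
    ((presCon S).lift ((presCon R).mk'.comp g)
      (Con.conGen_le.mpr fun u v h => (Con.ker_rel _).mpr ((Con.eq _).mpr (hg u v h))))
    (Con.hom_ext <| MonoidHom.ext fun u => (Con.eq _).mpr (hgf u))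
    (Con.hom_ext <| MonoidHom.ext fun w => (Con.eq _).mpr (hfg w))

end Presentation

section Reduction

variable {A : Type*} (R : Set (FreeMonoid A × FreeMonoid A)) {m : ℕ}

open Classical in
noncomputable def canonRelWord (x : (presCon R).Quotient) : FreeMonoid A :=
  if h : ∃ w, IsRelWord R w ∧ (presCon R).mk' w = x ∧ ∀ c ∈ w, ¬ IsRelWord R (of c) then
    h.choose
  else if h' : ∃ w, IsRelWord R w ∧ (presCon R).mk' w = x then h'.choose else 1

def keptLetters : Set A :=
  {a | IsRelWord R (of a) → canonRelWord R ((presCon R).mk' (of a)) = of a}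

open Classical in
noncomputable def substLetter (a : A) : FreeMonoid A :=
  if IsRelWord R (of a) then canonRelWord R ((presCon R).mk' (of a)) else of a

noncomputable def reduceWord : FreeMonoid A →* FreeMonoid (keptLetters R) :=
  (restrict (keptLetters R)).comp (lift (substLetter R))

def reducedPres : Set (FreeMonoid (keptLetters R) × FreeMonoid (keptLetters R)) :=
  kernelPres (fun w => IsRelWord R (map Subtype.val w))
    (fun w => (presCon R).mk' (map Subtype.val w))

variable {R}

theorem isRelWord_reducedPres {w : FreeMonoid (keptLetters R)} :
    IsRelWord (reducedPres R) w ↔ IsRelWord R (map Subtype.val w) :=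
  isRelWord_kernelPres

theorem canonRelWord_spec {x : (presCon R).Quotient}
    (h : ∃ w, IsRelWord R w ∧ (presCon R).mk' w = x) :
    IsRelWord R (canonRelWord R x) ∧ (presCon R).mk' (canonRelWord R x) = x := by
  unfold canonRelWord
  split_ifs with h'
  exacts [⟨h'.choose_spec.1, h'.choose_spec.2.1⟩, h.choose_spec]

theorem canonRelWord_avoids {x : (presCon R).Quotient}
    (h : ∃ w, IsRelWord R w ∧ (presCon R).mk' w = x ∧ ∀ c ∈ w, ¬ IsRelWord R (of c)) :
    ∀ c ∈ canonRelWord R x, ¬ IsRelWord R (of c) := by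
  rw [canonRelWord, dif_pos h]
  exact h.choose_spec.2.2

theorem mk_substLetter (a : A) : (presCon R).mk' (substLetter R a) = (presCon R).mk' (of a) := by
  unfold substLetter
  split_ifs with ha
  exacts [(canonRelWord_spec ⟨of a, ha, rfl⟩).2, rfl]

theorem substLetter_of_mem_keptLetters {a : A} (ha : a ∈ keptLetters R) :
    substLetter R a = of a := by
  unfold substLetter
  split_ifs with h
  exacts [ha h, rfl]

theorem mem_keptLetters_of_mem_substLetter (hso : SmallOverlapC R m) (hm : 2 ≤ m) {a c : A}
    (hc : c ∈ substLetter R a) : c ∈ keptLetters R := by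
  by_cases ha : IsRelWord R (of a)
  · rw [substLetter, if_pos ha] at hc
    obtain ⟨hw, hmk⟩ := canonRelWord_spec ⟨of a, ha, rfl⟩
    rcases hso.eq_of_or_forall_not hm hw with ⟨b, -, hwb⟩ | havoid
    · rw [hwb, mem_of] at hc
      subst hc
      rw [hwb] at hmk
      exact fun _ => hmk ▸ hwb
    · exact fun hc' => absurd hc' (havoid c hc)
  · rw [substLetter, if_neg ha, mem_of] at hc
    exact fun hc' => absurd (hc ▸ hc') ha

theorem mem_keptLetters_of_mem_lift (hso : SmallOverlapC R m) (hm : 2 ≤ m)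
    {w : FreeMonoid A} {c : A} (hc : c ∈ lift (substLetter R) w) : c ∈ keptLetters R := by
  induction w using FreeMonoid.inductionOn' with
  | one => exact absurd hc notMem_one
  | of_mul a w ih =>
    rw [map_mul, lift_eval_of, mem_mul] at hc
    exact hc.elim (mem_keptLetters_of_mem_substLetter hso hm) ih

theorem mk_lift_substLetter (w : FreeMonoid A) :
    (presCon R).mk' (lift (substLetter R) w) = (presCon R).mk' w :=
  DFunLike.congr_fun (hom_eq (f := (presCon R).mk'.comp (lift (substLetter R)))
    (g := (presCon R).mk') mk_substLetter) w

theorem isRelWord_lift_substLetter (hso : SmallOverlapC R m) (hm : 2 ≤ m) {w : FreeMonoid A}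
    (hw : IsRelWord R w) : IsRelWord R (lift (substLetter R) w) := by
  rcases hso.eq_of_or_forall_not hm hw with ⟨a, ha, rfl⟩ | havoid
  · rw [lift_eval_of, substLetter, if_pos ha]
    exact (canonRelWord_spec ⟨of a, ha, rfl⟩).1
  · rwa [lift_eq_self fun c hc => by rw [substLetter, if_neg (havoid c hc)]]

/-- A relation word avoiding the letters that are relation words would have been preferred by
`canonRelWord`, and a second such letter in the class could not be kept. -/
theorem eq_of_mk_eq_of_mem_keptLetters (hso : SmallOverlapC R m) (hm : 2 ≤ m) {b : A}
    (hb : b ∈ keptLetters R) (hbR : IsRelWord R (of b)) {w : FreeMonoid A} (hw : IsRelWord R w)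
    (hwk : ∀ c ∈ w, c ∈ keptLetters R) (hmk : (presCon R).mk' w = (presCon R).mk' (of b)) :
    w = of b := by
  rcases hso.eq_of_or_forall_not hm hw with ⟨c, hc, rfl⟩ | havoid
  · have hcc := hwk c mem_of_self hc
    rw [hmk, hb hbR] at hcc
    exact hcc.symm
  · exact absurd hbR
      (canonRelWord_avoids ⟨w, hw, hmk, havoid⟩ b (by rw [hb hbR]; exact mem_of_self))

theorem map_val_reduceWord (hso : SmallOverlapC R m) (hm : 2 ≤ m) (w : FreeMonoid A) :
    map Subtype.val (reduceWord R w) = lift (substLetter R) w :=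
  map_val_restrict fun _ => mem_keptLetters_of_mem_lift hso hm

theorem mk_map_val_reduceWord (hso : SmallOverlapC R m) (hm : 2 ≤ m) (w : FreeMonoid A) :
    (presCon R).mk' (map Subtype.val (reduceWord R w)) = (presCon R).mk' w := by
  rw [map_val_reduceWord hso hm, mk_lift_substLetter]

theorem reduceWord_map_val (w : FreeMonoid (keptLetters R)) :
    reduceWord R (map Subtype.val w) = w := by
  have : lift (substLetter R) (map Subtype.val w) = map Subtype.val w := lift_eq_self fun a ha => by
    obtain ⟨c, -, rfl⟩ := mem_map.mp ha
    exact substLetter_of_mem_keptLetters c.2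
  rw [reduceWord, MonoidHom.comp_apply, this, restrict_map_val]

theorem smallOverlapC_reducedPres (hso : SmallOverlapC R m) : SmallOverlapC (reducedPres R) m :=
  hso.of_map (map_injective Subtype.val_injective) fun _ => isRelWord_reducedPres.mp

theorem isEquivPres_reducedPres : IsEquivPres (reducedPres R) :=
  isEquivPres_kernelPres _ _

theorem generatorMinimal_reducedPres (hso : SmallOverlapC R m) (hm : 2 ≤ m) :
    GeneratorMinimal (reducedPres R) := by
  intro b
  have hne : ∀ p ∈ reducedPres R, p.1 ≠ 1 := fun p hp h =>
    hso.ne_one (by omega) hp.1 (by rw [h, map_one])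
  have hof : ∀ p ∈ reducedPres R, p.1 = of b → p.2 = of b := by
    rintro ⟨u, v⟩ ⟨hu, hv, huv⟩ (rfl : u = of b)
    refine map_injective Subtype.val_injective
      (eq_of_mk_eq_of_mem_keptLetters hso hm b.2 hu hv (fun c hc => ?_) huv.symm)
    obtain ⟨d, -, rfl⟩ := mem_map.mp hc
    exact d.2
  refine not_isRedundant_of fun p hp => ?_
  have hp' : (p.2, p.1) ∈ reducedPres R := isEquivPres_reducedPres.2.1 _ _ hp
  exact ⟨hne p hp, hne _ hp', hof p hp, hof _ hp'⟩

theorem reduceWord_mem_reducedPres (hso : SmallOverlapC R m) (hm : 2 ≤ m) {u v : FreeMonoid A}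
    (huv : (u, v) ∈ R) : (reduceWord R u, reduceWord R v) ∈ reducedPres R := by
  refine ⟨?_, ?_, ?_⟩ <;> dsimp only <;>
    simp only [map_val_reduceWord hso hm, mk_lift_substLetter]
  · exact isRelWord_lift_substLetter hso hm ⟨_, huv, .inl rfl⟩
  · exact isRelWord_lift_substLetter hso hm ⟨_, huv, .inr rfl⟩
  · exact (Con.eq _).mpr (ConGen.Rel.of _ _ huv)

noncomputable def reducedPresEquiv (hso : SmallOverlapC R m) (hm : 2 ≤ m) :
    (presCon R).Quotient ≃* (presCon (reducedPres R)).Quotient :=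
  presQuotientEquiv (reduceWord R) (map Subtype.val)
    (fun _ _ huv => ConGen.Rel.of _ _ (reduceWord_mem_reducedPres hso hm huv))
    (fun _ _ huv => (Con.eq _).mp huv.2.2)
    (fun u => (Con.eq _).mp (mk_map_val_reduceWord hso hm u))
    (fun w => by rw [reduceWord_map_val]; exact (presCon _).refl w)

end Reduction

/-- **Proposition.** For `m ≥ 2`, every monoid admitting a C(m) presentation also admits
a generator-minimal C(m) equivalence presentation. -/
theorem statement4 {M : Type u} [Monoid M] (m : ℕ) (hm : 2 ≤ m)
    (h : ∃ (A : Type v) (R : Set (FreeMonoid A × FreeMonoid A)),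
      SmallOverlapC R m ∧ Nonempty (M ≃* (presCon R).Quotient)) :
    ∃ (B : Type v) (S : Set (FreeMonoid B × FreeMonoid B)),
      SmallOverlapC S m ∧ GeneratorMinimal S ∧ IsEquivPres S ∧
      Nonempty (M ≃* (presCon S).Quotient) := by
  obtain ⟨A, R, hso, ⟨e⟩⟩ := h
  exact ⟨keptLetters R, reducedPres R, smallOverlapC_reducedPres hso,
    generatorMinimal_reducedPres hso hm, isEquivPres_reducedPres,
    ⟨e.trans (reducedPresEquiv hso hm)⟩⟩
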